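/- For all real numbers C, ε > 0 and every natural number m ≥ 1 there is a natural number n such that for every C-Lipschitz function f : PS_{ℓ_∞^n} → ℝ defined on the positive unit sphere of ℓ_∞^n, there is a normalized positive block sequence (y_i)_{i<m} of vectors of ℓ_∞^n such that osc(f ↾ PS_{[y_i]_{i<m}}) < ε, where PS_{[y_i]_{i<m}} is the set of positive norm-one vectors in the linear span of (y_i)_{i<m}. -/

import Mathlib

/-- The positive unit sphere of `ℓ_∞^n`: positive vectors of sup-norm one. -/
def PosSphere (n : ℕ) : Set (Fin n → ℝ) :=
  {x | (∀ i, 0 ≤ x i) ∧ ‖x‖ = 1}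

/-- `(y i)_{i<m}` is a normalized positive block sequence in `ℓ_∞^n`. -/
def IsPosBlockSeq {n : ℕ} (m : ℕ) (y : Fin m → (Fin n → ℝ)) : Prop :=
  (∀ i, ∀ a, 0 ≤ y i a) ∧ (∀ i, ‖y i‖ = 1) ∧
  ∀ i j : Fin m, i < j → ∀ a : Fin n, y i a ≠ 0 → ∀ b : Fin n, y j b ≠ 0 → a < b

/-- The positive unit sphere of the span of a finite sequence of vectors. -/
def PosSphereSpan {n m : ℕ} (y : Fin m → (Fin n → ℝ)) : Set (Fin n → ℝ) :=
  {v | v ∈ Submodule.span ℝ (Set.range y) ∧ (∀ i, 0 ≤ v i) ∧ ‖v‖ = 1}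

/-!
Gowers' `FIN_k` theorem does the work. A pattern `q : ℕ → {0, …, k}` is realised as the vector
with entries `Λ ^ (k - q a)` on its support, and the tetris map `T q = q - 1` multiplies those
entries by `Λ`. If `y_0 < ⋯ < y_{m-1}` are patterns of height `k`, every positive norm-one vector
`∑ c_i y_i` of their realised span lies within `1 - Λ` of the realisation of
`T^{p_0} y_0 ∨ ⋯ ∨ T^{p_{m-1}} y_{m-1}`, where `p_i` counts the `Λ`-steps of `c_i` below `1`
(once `Λ ^ k ≤ 1 - Λ`); some `p_i` is `0` because the norm is `1`.

Colour each pattern by the `ε/2`-bucket of `f` at its realisation. Gowers' theorem gives a block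
sequence all of whose combinations with some exponent `0` have the same colour; it is proved with
idempotent ultrafilters `e_0, …, e_k` on patterns with `T e_{j+1} = e_j` and
`e_i e_j = e_j e_i = e_{max i j}`. An ultralimit over the dimension makes `n` independent of `f`,
and the Lipschitz bound turns "within `1 - Λ` of one colour class" into oscillation `< ε`.
-/

open Filter

attribute [local instance] Ultrafilter.mul Ultrafilter.semigroup

namespace Ultrafilter

variable {M N : Type*}

lemma pure_one_mul [MulOneClass M] (U : Ultrafilter M) : pure 1 * U = U :=
  coe_inj.1 <| Filter.ext' fun _ => by simp [eventually_mul]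

lemma map_mul_hom [Mul M] [Mul N] {F : Type*} [FunLike F M N] [MulHomClass F M N] (g : F)
    (U V : Ultrafilter M) : (U * V).map g = U.map g * V.map g :=
  coe_inj.1 <| Filter.ext' fun _ => by simp [eventually_mul]

lemma mul_mem_of_forall [Mul M] {U V : Ultrafilter M} {s t u : Set M} (hs : s ∈ U) (ht : t ∈ V)
    (h : ∀ x ∈ s, ∀ y ∈ t, x * y ∈ u) : u ∈ U * V :=
  (eventually_mul U V (· ∈ u)).2 <|
    Filter.mem_of_superset hs fun x hx => Filter.mem_of_superset ht fun y hy => h x hx y hy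

lemma continuous_map (g : M → N) : Continuous (Ultrafilter.map g) :=
  ultrafilterBasis_is_basis.continuous_iff.2 <| Set.forall_mem_range.2 fun s => by
    simpa only [Set.preimage_ofPred_eq, mem_map] using ultrafilter_isOpen_basic (g ⁻¹' s)

lemma map_eq_pure_of_mem {g : M → N} {U : Ultrafilter M} {s : Set M} {b : N} (hs : s ∈ U)
    (h : ∀ x ∈ s, g x = b) : U.map g = pure b := by
  obtain ⟨c, hc, hUc⟩ := eq_pure_of_finite_mem (Set.finite_singleton b)
    (mem_map.2 (Filter.mem_of_superset hs fun x hx => h x hx) : {b} ∈ U.map g)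
  rwa [Set.mem_singleton_iff.1 hc] at hUc

end Ultrafilter

/-- Gowers' `FIN_k` lives in `ℕ → ℕ`. Pointwise `max` agrees with Gowers' sum on patterns with
disjoint supports and, unlike the sum, is defined everywhere. -/
def MaxSeq : Type := ℕ → ℕ

namespace MaxSeq

instance : CommMonoid MaxSeq where
  mul q r := fun a => max (q a) (r a)
  one := fun _ => 0
  mul_assoc _ _ _ := funext fun _ => max_assoc _ _ _
  one_mul _ := funext fun _ => Nat.zero_max _
  mul_one _ := funext fun _ => Nat.max_zero _
  mul_comm _ _ := funext fun _ => max_comm _ _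

@[simp] lemma mul_apply (q r : MaxSeq) (a : ℕ) : (q * r) a = max (q a) (r a) := rfl

@[simp] lemma one_apply (a : ℕ) : (1 : MaxSeq) a = 0 := rfl

lemma prod_apply {ι : Type*} (s : Finset ι) (g : ι → MaxSeq) (a : ℕ) :
    (∏ i ∈ s, g i) a = s.sup fun i => g i a := by
  classical
  induction s using Finset.induction_on with
  | empty => rfl
  | insert i s hi ih => rw [Finset.prod_insert hi, mul_apply, ih, Finset.sup_insert]

def tetris (d : ℕ) : MaxSeq →* MaxSeq where
  toFun q := fun a => q a - d
  map_one' := funext fun _ => Nat.zero_sub d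
  map_mul' q r := funext fun a => by
    change q a ⊔ r a - d = (q a - d) ⊔ (r a - d)
    omega

@[simp] lemma tetris_apply (d : ℕ) (q : MaxSeq) (a : ℕ) : tetris d q a = q a - d := rfl

lemma tetris_succ (d : ℕ) : ⇑(tetris (d + 1)) = tetris 1 ∘ tetris d :=
  funext fun _ => funext fun _ => by simp only [Function.comp_apply, tetris_apply]; omega

lemma tetris_eq_one_of_le {d : ℕ} {q : MaxSeq} (h : ∀ a, q a ≤ d) : tetris d q = 1 :=
  funext fun a => Nat.sub_eq_zero_of_le (h a)

def lift (q : MaxSeq) : MaxSeq := fun a => if q a = 0 then 0 else q a + 1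

lemma tetris_one_comp_lift : tetris 1 ∘ lift = id :=
  funext fun q => funext fun a => by
    simp only [Function.comp_apply, tetris_apply, lift, id]
    split_ifs <;> omega

def FIN (k : ℕ) : Set MaxSeq :=
  {q | {a | q a ≠ 0}.Finite ∧ (∀ a, q a ≤ k) ∧ ∃ a, q a = k}

def Beyond (N : ℕ) : Set MaxSeq := {q | ∀ a ≤ N, q a = 0}

lemma FIN_zero : FIN 0 = {1} := by
  ext q
  refine ⟨fun hq => funext fun a => Nat.le_zero.1 (hq.2.1 a), ?_⟩
  rintro rfl
  exact ⟨by simp, fun _ => le_rfl, 0, rfl⟩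

lemma mul_mem_FIN {i j : ℕ} {q r : MaxSeq} (hq : q ∈ FIN i) (hr : r ∈ FIN j) :
    q * r ∈ FIN (max i j) := by
  obtain ⟨hqf, hqle, a, ha⟩ := hq
  obtain ⟨hrf, hrle, b, hb⟩ := hr
  refine ⟨(hqf.union hrf).subset fun c hc => ?_, fun c => max_le_max (hqle c) (hrle c), ?_⟩
  · simp only [Set.mem_ofPred_eq, mul_apply, Set.mem_union] at hc ⊢
    omega
  · rcases le_total i j with h | h
    · exact ⟨b, by simp only [mul_apply]; have := hqle b; omega⟩
    · exact ⟨a, by simp only [mul_apply]; have := hrle a; omega⟩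

lemma lift_mem_FIN {k : ℕ} (hk : 1 ≤ k) {q : MaxSeq} (hq : q ∈ FIN k) :
    lift q ∈ FIN (k + 1) := by
  obtain ⟨hf, hle, a, ha⟩ := hq
  refine ⟨hf.subset fun c hc => ?_, fun c => ?_, a, ?_⟩
  · simp only [Set.mem_ofPred_eq, lift] at hc ⊢
    split_ifs at hc <;> omega
  · simp only [lift]
    have := hle c
    split_ifs <;> omega
  · simp only [lift]
    split_ifs <;> omega

lemma one_mem_Beyond (N : ℕ) : (1 : MaxSeq) ∈ Beyond N := fun _ _ => rfl

lemma mul_mem_Beyond {N : ℕ} {q r : MaxSeq} (hq : q ∈ Beyond N) (hr : r ∈ Beyond N) :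
    q * r ∈ Beyond N := fun a ha => by simp [hq a ha, hr a ha]

lemma lift_mem_Beyond {N : ℕ} {q : MaxSeq} (hq : q ∈ Beyond N) : lift q ∈ Beyond N :=
  fun a ha => by simp [lift, hq a ha]

/-- Todorcevic's `γFIN_k`. -/
def γFIN (k : ℕ) : Set (Ultrafilter MaxSeq) := {U | FIN k ∈ U ∧ ∀ N, Beyond N ∈ U}

lemma isClosed_γFIN (k : ℕ) : IsClosed (γFIN k) := by
  simp only [γFIN, Set.ofPred_and, Set.ofPred_forall]
  exact (ultrafilter_isClosed_basic _).inter
    (isClosed_iInter fun _ => ultrafilter_isClosed_basic _)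

lemma mul_mem_γFIN {i j : ℕ} {U V : Ultrafilter MaxSeq} (hU : U ∈ γFIN i) (hV : V ∈ γFIN j) :
    U * V ∈ γFIN (max i j) :=
  ⟨Ultrafilter.mul_mem_of_forall hU.1 hV.1 fun _ hq _ hr => mul_mem_FIN hq hr, fun N =>
    Ultrafilter.mul_mem_of_forall (hU.2 N) (hV.2 N) fun _ hq _ hr => mul_mem_Beyond hq hr⟩

lemma γFIN_nonempty (k : ℕ) : (γFIN k).Nonempty := by
  let peak : ℕ → MaxSeq := fun N => (fun a => if a = N + 1 then k else 0 : ℕ → ℕ)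
  refine ⟨.of (atTop.map peak), ?_, fun N => ?_⟩ <;>
    refine Ultrafilter.of_le _ (Filter.mem_map.2 ?_)
  · refine Filter.Eventually.of_forall fun N =>
      ⟨(Set.finite_singleton (N + 1)).subset fun a ha => ?_, fun a => ?_, N + 1, if_pos rfl⟩
    · by_contra h
      exact ha (if_neg h)
    · simp only [peak]
      split_ifs <;> omega
  · filter_upwards [eventually_ge_atTop N] with M hM a ha
    exact if_neg (by omega)

lemma eq_pure_one_of_mem_γFIN_zero {U : Ultrafilter MaxSeq} (hU : U ∈ γFIN 0) : U = pure 1 := by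
  obtain ⟨q, hq, rfl⟩ :=
    Ultrafilter.eq_pure_of_finite_mem (Set.finite_singleton 1) (FIN_zero ▸ hU.1)
  rw [Set.mem_singleton_iff.1 hq]

lemma exists_map_tetris_one_eq {k : ℕ} {U : Ultrafilter MaxSeq} (hU : U ∈ γFIN k) :
    ∃ V ∈ γFIN (k + 1), V.map (tetris 1) = U := by
  rcases Nat.eq_zero_or_pos k with rfl | hk
  · obtain ⟨V, hV⟩ := γFIN_nonempty 1
    refine ⟨V, hV, ?_⟩
    rw [eq_pure_one_of_mem_γFIN_zero hU]
    exact Ultrafilter.map_eq_pure_of_mem hV.1 fun q hq => tetris_eq_one_of_le hq.2.1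
  · refine ⟨U.map lift, ⟨?_, fun N => ?_⟩, ?_⟩
    · exact Ultrafilter.mem_map.2 (Filter.mem_of_superset hU.1 fun q hq => lift_mem_FIN hk hq)
    · exact Ultrafilter.mem_map.2 (Filter.mem_of_superset (hU.2 N) fun q hq => lift_mem_Beyond hq)
    · rw [Ultrafilter.map_map, tetris_one_comp_lift, Ultrafilter.map_id]

/-- Gowers' sequence of idempotents `e_0 ≤ ⋯ ≤ e_k`; idempotence is the case `i = j` of
`mul_of_le`. -/
structure IsCohesive (k : ℕ) (e : ℕ → Ultrafilter MaxSeq) : Prop where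
  mem_γFIN : ∀ j ≤ k, e j ∈ γFIN j
  map_tetris_one : ∀ j < k, (e (j + 1)).map (tetris 1) = e j
  mul_of_le : ∀ i j, i ≤ j → j ≤ k → e i * e j = e j ∧ e j * e i = e j

namespace IsCohesive

variable {k : ℕ} {e : ℕ → Ultrafilter MaxSeq}

lemma zero_eq (he : IsCohesive k e) : e 0 = pure 1 :=
  eq_pure_one_of_mem_γFIN_zero (he.mem_γFIN 0 (Nat.zero_le k))

lemma map_tetris (he : IsCohesive k e) {j : ℕ} (hj : j ≤ k) (d : ℕ) :
    (e j).map (tetris d) = e (j - d) := by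
  induction d with
  | zero => exact Ultrafilter.map_id' _
  | succ d ih =>
    rw [tetris_succ, ← Ultrafilter.map_map, ih]
    rcases Nat.eq_zero_or_pos (j - d) with h | h
    · rw [h, show j - (d + 1) = 0 by omega, he.zero_eq, Ultrafilter.map_pure, map_one]
    · rw [← he.map_tetris_one (j - (d + 1)) (by omega), show j - (d + 1) + 1 = j - d by omega]

lemma mul_eq_max (he : IsCohesive k e) {i j : ℕ} (hi : i ≤ k) (hj : j ≤ k) :
    e i * e j = e (max i j) := by
  rcases le_total i j with h | h
  · rw [max_eq_right h, (he.mul_of_le i j h hj).1]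
  · rw [max_eq_left h, (he.mul_of_le j i h hi).2]

/-- The next idempotent is `e k * u` for an idempotent `u` of the compact semigroup of lifts
`V` of `e k` with `V * e k = V`. -/
lemma exists_next (he : IsCohesive k e) :
    ∃ E ∈ γFIN (k + 1), E.map (tetris 1) = e k ∧ E * E = E ∧
      ∀ i ≤ k, e i * E = E ∧ E * e i = E := by
  have hek : e k * e k = e k := (he.mul_of_le k k le_rfl le_rfl).1
  have hT : (e k).map (tetris 1) = e (k - 1) := he.map_tetris le_rfl 1
  have hk1 := he.mul_of_le (k - 1) k (Nat.sub_le k 1) le_rfl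
  let S := {V ∈ γFIN (k + 1) | V.map (tetris 1) = e k ∧ V * e k = V}
  have hS_mul : ∀ U ∈ S, ∀ V ∈ S, U * V ∈ S := by
    rintro U ⟨hU, hUT, -⟩ V ⟨hV, hVT, hVe⟩
    refine ⟨max_self (k + 1) ▸ mul_mem_γFIN hU hV, ?_, by rw [mul_assoc, hVe]⟩
    rw [Ultrafilter.map_mul_hom (tetris 1), hUT, hVT, hek]
  have hS_nonempty : S.Nonempty := by
    obtain ⟨V, hV, hVT⟩ := exists_map_tetris_one_eq (he.mem_γFIN k le_rfl)
    refine ⟨V * e k, ?_, ?_, by rw [mul_assoc, hek]⟩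
    · simpa using mul_mem_γFIN hV (he.mem_γFIN k le_rfl)
    · rw [Ultrafilter.map_mul_hom (tetris 1), hVT, hT, hk1.2]
  have hS_closed : IsClosed S :=
    (isClosed_γFIN _).inter <|
      (isClosed_eq (Ultrafilter.continuous_map _) continuous_const).inter <|
        isClosed_eq (Ultrafilter.continuous_mul_left (e k)) continuous_id
  obtain ⟨u, ⟨hu, huT, hue⟩, huu⟩ := exists_idempotent_in_compact_subsemigroup
    Ultrafilter.continuous_mul_left S hS_nonempty hS_closed.isCompact hS_mul
  refine ⟨e k * u, by simpa using mul_mem_γFIN (he.mem_γFIN k le_rfl) hu, ?_, ?_,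
    fun i hi => ⟨?_, ?_⟩⟩
  · rw [Ultrafilter.map_mul_hom (tetris 1), huT, hT, hk1.1]
  · rw [mul_assoc, ← mul_assoc u, hue, huu]
  · rw [← mul_assoc, (he.mul_of_le i k hi le_rfl).1]
  · rw [mul_assoc, ← hue, mul_assoc, (he.mul_of_le i k hi le_rfl).2]

lemma update (he : IsCohesive k e) {E : Ultrafilter MaxSeq} (hE : E ∈ γFIN (k + 1))
    (hET : E.map (tetris 1) = e k) (hEE : E * E = E) (heE : ∀ i ≤ k, e i * E = E ∧ E * e i = E) :
    IsCohesive (k + 1) (Function.update e (k + 1) E) := by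
  refine ⟨fun j hj => ?_, fun j hj => ?_, fun i j hij hj => ?_⟩
  · obtain hj | rfl := Nat.le_succ_iff.1 hj
    · rw [Function.update_of_ne (by omega)]
      exact he.mem_γFIN j hj
    · rwa [Function.update_self]
  · obtain hj | rfl := Nat.lt_succ_iff_lt_or_eq.1 hj
    · rw [Function.update_of_ne (by omega), Function.update_of_ne (by omega)]
      exact he.map_tetris_one j hj
    · rwa [Function.update_self, Function.update_of_ne (by omega)]
  · obtain hj | rfl := Nat.le_succ_iff.1 hj
    · rw [Function.update_of_ne (by omega), Function.update_of_ne (by omega)]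
      exact he.mul_of_le i j hij hj
    · obtain hi | rfl := Nat.le_succ_iff.1 hij
      · rw [Function.update_of_ne (by omega), Function.update_self]
        exact heE i hi
      · rw [Function.update_self]
        exact ⟨hEE, hEE⟩

end IsCohesive

lemma exists_isCohesive (k : ℕ) : ∃ e, IsCohesive k e := by
  induction k with
  | zero =>
    refine ⟨fun _ => pure 1, fun j hj => ?_, fun j hj => absurd hj (Nat.not_lt_zero j),
      fun _ _ _ _ => ⟨Ultrafilter.pure_one_mul _, Ultrafilter.pure_one_mul _⟩⟩
    obtain rfl := Nat.le_zero.1 hj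
    exact ⟨FIN_zero ▸ rfl, one_mem_Beyond⟩
  | succ k ih =>
    obtain ⟨e, he⟩ := ih
    obtain ⟨E, hE, hET, hEE, heE⟩ := he.exists_next
    exact ⟨_, he.update hE hET hEE heE⟩

section Combinations

variable {m k : ℕ}

/-- On blocks of `FIN k` the exponent `k` gives `1`, so it stands for leaving the block out. -/
def combo (y : Fin m → MaxSeq) (p : Fin m → Fin (k + 1)) : MaxSeq := ∏ i, tetris (p i) (y i)

lemma combo_snoc (y : Fin m → MaxSeq) (z : MaxSeq) (p : Fin (m + 1) → Fin (k + 1)) :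
    combo (Fin.snoc y z) p = combo y (fun i => p i.castSucc) * tetris (p (Fin.last m)) z := by
  simp [combo, Fin.prod_univ_castSucc]

lemma combo_apply_of_forall_ne {y : Fin m → MaxSeq} (p : Fin m → Fin (k + 1)) {i : Fin m}
    {a : ℕ} (h : ∀ j ≠ i, y j a = 0) : combo y p a = y i a - p i := by
  rw [combo, prod_apply]
  refine le_antisymm (Finset.sup_le fun j _ => ?_)
    (Finset.le_sup (f := fun j => tetris (p j) (y j) a) (Finset.mem_univ i))
  rcases eq_or_ne j i with rfl | hj
  · exact le_rfl
  · simp [h j hj]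

def IsBlockSeq (y : Fin m → MaxSeq) : Prop :=
  ∀ i j, i < j → ∀ a, y i a ≠ 0 → ∀ b, y j b ≠ 0 → a < b

lemma IsBlockSeq.eq_zero_of_ne {y : Fin m → MaxSeq} (hy : IsBlockSeq y) {i j : Fin m}
    (hij : i ≠ j) {a : ℕ} (ha : y i a ≠ 0) : y j a = 0 := by
  by_contra hja
  rcases hij.lt_or_gt with h | h
  · exact lt_irrefl a (hy i j h a ha a hja)
  · exact lt_irrefl a (hy j i h a hja a ha)

lemma IsBlockSeq.snoc {y : Fin m → MaxSeq} (hy : IsBlockSeq y) {N : ℕ}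
    (hN : ∀ i a, y i a ≠ 0 → a < N) {z : MaxSeq} (hz : z ∈ Beyond N) :
    IsBlockSeq (Fin.snoc y z) := by
  intro i j hij a ha b hb
  induction j using Fin.lastCases with
  | last =>
    obtain ⟨i, rfl⟩ := Fin.exists_castSucc_eq.2 hij.ne
    simp only [Fin.snoc_castSucc, Fin.snoc_last] at ha hb
    have := hN i a ha
    by_contra hab
    exact hb (hz b (by omega))
  | cast j =>
    obtain ⟨i, rfl⟩ := Fin.exists_castSucc_eq.2 (hij.trans (Fin.castSucc_lt_last j)).ne
    simp only [Fin.snoc_castSucc] at ha hb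
    exact hy i j (Fin.castSucc_lt_castSucc_iff.1 hij) a ha b hb

lemma exists_support_bound {y : Fin m → MaxSeq} (hy : ∀ i, y i ∈ FIN k) :
    ∃ N, ∀ i a, y i a ≠ 0 → a < N := by
  obtain ⟨N, hN⟩ := (Set.finite_iUnion fun i => (hy i).1).bddAbove
  exact ⟨N + 1, fun i a ha => Nat.lt_succ_of_le (hN (Set.mem_iUnion.2 ⟨i, ha⟩))⟩

end Combinations

section Gowers

variable {k : ℕ} {e : ℕ → Ultrafilter MaxSeq} {A : Set MaxSeq}

/-- The induction invariant of Gowers' theorem. At `l = 0`, where `e 0 = pure 1`, it says that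
`combo y p ∈ A`. -/
def CombosLarge (e : ℕ → Ultrafilter MaxSeq) (k : ℕ) (A : Set MaxSeq) {m : ℕ}
    (y : Fin m → MaxSeq) : Prop :=
  ∀ (p : Fin m → Fin (k + 1)) (l : ℕ), l ≤ k → (l = k ∨ ∃ i, p i = 0) →
    ∀ᶠ w in (e l : Filter MaxSeq), combo y p * w ∈ A

lemma combosLarge_elim0 (hA : A ∈ e k) : CombosLarge e k A (Fin.elim0 : Fin 0 → MaxSeq) := by
  rintro p l - (rfl | ⟨i, -⟩)
  · simpa [combo] using hA
  · exact i.elim0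

lemma CombosLarge.eventually_snoc (he : IsCohesive k e) {m : ℕ} {y : Fin m → MaxSeq}
    (hy : CombosLarge e k A y) :
    ∀ᶠ z in (e k : Filter MaxSeq), CombosLarge e k A (Fin.snoc y z) := by
  suffices h : ∀ᶠ z in (e k : Filter MaxSeq), ∀ (p : Fin m → Fin (k + 1)) (d l : Fin (k + 1)),
      ((l : ℕ) = k ∨ d = 0 ∨ ∃ i, p i = 0) →
        ∀ᶠ w in (e l : Filter MaxSeq), combo y p * (tetris d z * w) ∈ A by
    filter_upwards [h] with z hz p l hl hcond
    simp only [combo_snoc, mul_assoc]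
    refine hz _ _ ⟨l, Nat.lt_succ_of_le hl⟩ ?_
    rcases hcond with h | ⟨i, hi⟩
    · exact Or.inl h
    · induction i using Fin.lastCases with
      | last => exact Or.inr (Or.inl hi)
      | cast i => exact Or.inr (Or.inr ⟨i, hi⟩)
  simp only [Filter.eventually_all]
  intro p d l hcond
  have hl : (l : ℕ) ≤ k := Nat.lt_succ_iff.1 l.2
  have hL := hy p (max (k - d) l) (max_le (Nat.sub_le k d) hl) (by
    rcases hcond with h | h | h
    · exact Or.inl (by omega)
    · exact Or.inl (by rw [h, Fin.val_zero, Nat.sub_zero, max_eq_left hl])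
    · exact Or.inr h)
  -- `e (max (k - d) l) = (e k).map (tetris d) * e l`
  rw [← he.mul_eq_max (Nat.sub_le k d) hl, ← he.map_tetris le_rfl] at hL
  exact hL

lemma CombosLarge.combo_mem (he : IsCohesive k e) {m : ℕ} {y : Fin m → MaxSeq}
    (hy : CombosLarge e k A y) {p : Fin m → Fin (k + 1)} (hp : ∃ i, p i = 0) :
    combo y p ∈ A := by
  have := hy p 0 (Nat.zero_le k) (Or.inr hp)
  rw [he.zero_eq] at this
  simpa using this

/-- Gowers' `FIN_k` theorem in ultrafilter form. -/
theorem exists_isBlockSeq_combo_mem (he : IsCohesive k e) (hA : A ∈ e k) (m : ℕ) :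
    ∃ y : Fin m → MaxSeq, (∀ i, y i ∈ FIN k) ∧ IsBlockSeq y ∧
      ∀ p : Fin m → Fin (k + 1), (∃ i, p i = 0) → combo y p ∈ A := by
  suffices h : ∃ y : Fin m → MaxSeq, (∀ i, y i ∈ FIN k) ∧ IsBlockSeq y ∧ CombosLarge e k A y by
    obtain ⟨y, hFIN, hblock, hlarge⟩ := h
    exact ⟨y, hFIN, hblock, fun p hp => hlarge.combo_mem he hp⟩
  induction m with
  | zero => exact ⟨Fin.elim0, fun i => i.elim0, fun i => i.elim0, combosLarge_elim0 hA⟩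
  | succ m ih =>
    obtain ⟨y, hFIN, hblock, hlarge⟩ := ih
    obtain ⟨N, hN⟩ := exists_support_bound hFIN
    have hek := he.mem_γFIN k le_rfl
    obtain ⟨z, hzFIN, hzN, hz⟩ :=
      (Filter.eventually_mem_set.2 hek.1 |>.and <| Filter.eventually_mem_set.2 (hek.2 N) |>.and <|
        hlarge.eventually_snoc he).exists
    refine ⟨Fin.snoc y z, fun i => ?_, hblock.snoc hN hzN, hz⟩
    induction i using Fin.lastCases with
    | last => simpa using hzFIN
    | cast i => simpa using hFIN i

end Gowers

theorem exists_finite_gowers (k m : ℕ) (κ : Type*) [Finite κ] :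
    ∃ N, ∀ c : MaxSeq → κ, ∃ y : Fin m → MaxSeq, (∀ i, y i ∈ FIN k) ∧
      (∀ i a, y i a ≠ 0 → a < N) ∧ IsBlockSeq y ∧
      ∃ col, ∀ p : Fin m → Fin (k + 1), (∃ i, p i = 0) → c (combo y p) = col := by
  by_contra! h
  choose c hc using h
  -- the limit colouring `c'` of the counterexamples `c N` along a free ultrafilter
  have hlim : ∀ q, ∃ col, ∀ᶠ N in (hyperfilter ℕ : Filter ℕ), c N q = col := fun q => by
    obtain ⟨col, hcol⟩ := ((hyperfilter ℕ).map fun N => c N q).eq_pure_of_finite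
    have hmem : {col} ∈ (hyperfilter ℕ).map fun N => c N q := hcol ▸ rfl
    exact ⟨col, Ultrafilter.mem_map.1 hmem⟩
  choose c' hc' using hlim
  obtain ⟨e, he⟩ := exists_isCohesive k
  obtain ⟨col, hcol⟩ := ((e k).map c').eq_pure_of_finite
  have hmem : {col} ∈ (e k).map c' := hcol ▸ rfl
  obtain ⟨y, hFIN, hblock, hy⟩ := exists_isBlockSeq_combo_mem he (Ultrafilter.mem_map.1 hmem) m
  obtain ⟨M, hM⟩ := exists_support_bound hFIN
  have hM' : ∀ᶠ N in (hyperfilter ℕ : Filter ℕ), M ≤ N :=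
    Nat.hyperfilter_le_atTop (eventually_ge_atTop M)
  obtain ⟨N, hMN, hN⟩ :=
    (hM'.and <| Filter.eventually_all.2 fun p : Fin m → Fin (k + 1) => hc' (combo y p)).exists
  obtain ⟨p, hp, hne⟩ := hc N y hFIN (fun i a ha => (hM i a ha).trans_le hMN) hblock col
  exact hne ((hN p).trans (hy p hp))

end MaxSeq

section Realization

open MaxSeq

variable {n m k : ℕ} {Λ : ℝ}

def level (Λ : ℝ) (k s : ℕ) : ℝ := if s = 0 then 0 else Λ ^ (k - s)

/-- Gowers' map from `FIN_k` onto a `Λ`-net of the positive sphere. -/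
def realize (n k : ℕ) (Λ : ℝ) (q : MaxSeq) : Fin n → ℝ := fun a => level Λ k (q a)

lemma level_nonneg (hΛ : 0 ≤ Λ) (s : ℕ) : 0 ≤ level Λ k s := by
  unfold level
  split_ifs <;> positivity

lemma level_le_one (hΛ0 : 0 ≤ Λ) (hΛ1 : Λ ≤ 1) (s : ℕ) : level Λ k s ≤ 1 := by
  unfold level
  split_ifs
  exacts [zero_le_one, pow_le_one₀ hΛ0 hΛ1]

lemma level_self (hk : k ≠ 0) : level Λ k k = 1 := by simp [level, hk]

lemma ne_zero_of_level_ne_zero {s : ℕ} (h : level Λ k s ≠ 0) : s ≠ 0 := by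
  rintro rfl
  simp [level] at h

lemma abs_mul_level_sub_level_tsub_le (hΛ0 : 0 ≤ Λ) (hΛ1 : Λ ≤ 1) (hΛk : Λ ^ k ≤ 1 - Λ)
    {c : ℝ} {d s : ℕ} (hc : 0 ≤ c) (hs : s ≤ k) (hcd : c ≤ Λ ^ d)
    (hdc : d < k → Λ ^ (d + 1) < c) : |c * level Λ k s - level Λ k (s - d)| ≤ 1 - Λ := by
  rcases Nat.eq_zero_or_pos s with rfl | hs0
  · simp only [level, if_pos, mul_zero, Nat.zero_sub, sub_zero, abs_zero]
    linarith
  have hx0 : 0 ≤ Λ ^ (k - s) := pow_nonneg hΛ0 _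
  have hx1 : Λ ^ (k - s) ≤ 1 := pow_le_one₀ hΛ0 hΛ1
  unfold level
  rw [if_neg hs0.ne']
  by_cases hds : d < s
  · rw [if_neg (by omega), show k - (s - d) = (k - s) + d by omega, pow_add]
    have hy1 : Λ ^ d ≤ 1 := pow_le_one₀ hΛ0 hΛ1
    have hlt : Λ ^ d * Λ < c := pow_succ Λ d ▸ hdc (by omega)
    rw [abs_le]
    constructor <;> nlinarith
  · rw [if_pos (by omega), sub_zero, abs_of_nonneg (mul_nonneg hc hx0)]
    calc c * Λ ^ (k - s) ≤ Λ ^ d * Λ ^ (k - s) := mul_le_mul_of_nonneg_right hcd hx0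
      _ = Λ ^ (d + (k - s)) := (pow_add Λ _ _).symm
      _ ≤ Λ ^ k := pow_le_pow_of_le_one hΛ0 hΛ1 (by omega)
      _ ≤ 1 - Λ := hΛk

lemma mem_posSphere_of_le_one {x : Fin n → ℝ} (h0 : ∀ a, 0 ≤ x a) (h1 : ∀ a, x a ≤ 1)
    {a : Fin n} (ha : x a = 1) : x ∈ PosSphere n := by
  refine ⟨h0, le_antisymm ((pi_norm_le_iff_of_nonneg zero_le_one).2 fun b => ?_) ?_⟩
  · rw [Real.norm_of_nonneg (h0 b)]
    exact h1 b
  · simpa [ha] using norm_le_pi_norm x a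

lemma one_mem_posSphere (a : Fin n) : (1 : Fin n → ℝ) ∈ PosSphere n :=
  mem_posSphere_of_le_one (fun _ => zero_le_one) (fun _ => le_rfl) (a := a) rfl

lemma norm_sub_le_one_of_mem_posSphere {x y : Fin n → ℝ} (hx : x ∈ PosSphere n)
    (hy : y ∈ PosSphere n) : ‖x - y‖ ≤ 1 := by
  refine (pi_norm_le_iff_of_nonneg zero_le_one).2 fun a => ?_
  have hxa := (norm_le_pi_norm x a).trans hx.2.le
  have hya := (norm_le_pi_norm y a).trans hy.2.le
  rw [Real.norm_of_nonneg (hx.1 a)] at hxa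
  rw [Real.norm_of_nonneg (hy.1 a)] at hya
  rw [Pi.sub_apply, Real.norm_eq_abs, abs_le]
  constructor <;> linarith [hx.1 a, hy.1 a]

lemma realize_mem_posSphere (hΛ0 : 0 ≤ Λ) (hΛ1 : Λ ≤ 1) (hk : k ≠ 0) {q : MaxSeq} {a : Fin n}
    (ha : q a = k) : realize n k Λ q ∈ PosSphere n :=
  mem_posSphere_of_le_one (fun _ => level_nonneg hΛ0 _) (fun _ => level_le_one hΛ0 hΛ1 _)
    (show level Λ k (q a) = 1 by rw [ha, level_self hk])

lemma exists_peak (hk : k ≠ 0) {q : MaxSeq} (hq : q ∈ FIN k) (hn : ∀ a, q a ≠ 0 → a < n) :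
    ∃ a : Fin n, q a = k := by
  obtain ⟨a, ha⟩ := hq.2.2
  exact ⟨⟨a, hn a (ha ▸ hk)⟩, ha⟩

lemma isPosBlockSeq_realize (hΛ0 : 0 ≤ Λ) (hΛ1 : Λ ≤ 1) (hk : k ≠ 0) {y : Fin m → MaxSeq}
    (hpeak : ∀ i, ∃ a : Fin n, y i a = k) (hy : IsBlockSeq y) :
    IsPosBlockSeq m fun i => realize n k Λ (y i) :=
  ⟨fun _ _ => level_nonneg hΛ0 _,
    fun i => (realize_mem_posSphere hΛ0 hΛ1 hk (hpeak i).choose_spec).2,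
    fun i j hij a ha b hb =>
      hy i j hij a (ne_zero_of_level_ne_zero ha) b (ne_zero_of_level_ne_zero hb)⟩

lemma realize_combo_mem_posSphere (hΛ0 : 0 ≤ Λ) (hΛ1 : Λ ≤ 1) (hk : k ≠ 0)
    {y : Fin m → MaxSeq} (hpeak : ∀ i, ∃ a : Fin n, y i a = k) (hy : IsBlockSeq y)
    {p : Fin m → Fin (k + 1)} (hp : ∃ i, p i = 0) : realize n k Λ (combo y p) ∈ PosSphere n := by
  obtain ⟨i, hi⟩ := hp
  obtain ⟨a, ha⟩ := hpeak i
  refine realize_mem_posSphere hΛ0 hΛ1 hk (a := a) ?_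
  rw [combo_apply_of_forall_ne p fun j hj => hy.eq_zero_of_ne hj.symm (ha ▸ hk), hi, ha]
  rfl

lemma exists_combo_near_of_mem_posSphereSpan (hΛ0 : 0 ≤ Λ) (hΛ1 : Λ < 1)
    (hΛk : Λ ^ k ≤ 1 - Λ) (hk : k ≠ 0) {y : Fin m → MaxSeq} (hle : ∀ i a, y i a ≤ k)
    (hpeak : ∀ i, ∃ a : Fin n, y i a = k) (hy : IsBlockSeq y) {v : Fin n → ℝ}
    (hv : v ∈ PosSphereSpan fun i => realize n k Λ (y i)) :
    ∃ p : Fin m → Fin (k + 1), (∃ i, p i = 0) ∧ ‖v - realize n k Λ (combo y p)‖ ≤ 1 - Λ := by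
  obtain ⟨hspan, hpos, hnorm⟩ := hv
  obtain ⟨c, hcv⟩ := (Submodule.mem_span_range_iff_exists_fun ℝ).1 hspan
  have hv_apply : ∀ i (a : Fin n), (∀ j ≠ i, y j a = 0) → v a = c i * level Λ k (y i a) :=
    fun i a h => by
      rw [← hcv, Finset.sum_apply, Finset.sum_eq_single i
        (fun j _ hj => by simp [realize, h j hj, level]) (by simp)]
      rfl
  have hv_le : ∀ a, v a ≤ 1 := fun a => by
    have := norm_le_pi_norm v a
    rw [hnorm, Real.norm_eq_abs] at this
    exact (le_abs_self _).trans this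
  have hc : ∀ i, 0 ≤ c i ∧ c i ≤ 1 := fun i => by
    obtain ⟨a, ha⟩ := hpeak i
    have := hv_apply i a fun j hj => hy.eq_zero_of_ne hj.symm (ha ▸ hk)
    rw [ha, level_self hk, mul_one] at this
    exact ⟨this ▸ hpos a, this ▸ hv_le a⟩
  -- `p i` is the number of `Λ`-steps that `c i` lies below `1`, capped at `k`.
  let p : Fin m → Fin (k + 1) := fun i =>
    ⟨Nat.findGreatest (fun d => c i ≤ Λ ^ d) k, Nat.lt_succ_of_le (Nat.findGreatest_le k)⟩
  have hp_le : ∀ i, c i ≤ Λ ^ (p i : ℕ) := fun i =>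
    Nat.findGreatest_spec (P := fun d => c i ≤ Λ ^ d) (Nat.zero_le k) (by simpa using (hc i).2)
  have hp_lt : ∀ i, (p i : ℕ) < k → Λ ^ ((p i : ℕ) + 1) < c i := fun i h =>
    not_le.1 (Nat.findGreatest_is_greatest (Nat.lt_succ_self _) h)
  obtain ⟨a, ha⟩ : ∃ a, Λ < v a := by
    by_contra! h
    have := (pi_norm_le_iff_of_nonneg hΛ0).2 fun a => (Real.norm_of_nonneg (hpos a)).trans_le (h a)
    linarith
  have : Nonempty (Fin m) := by
    by_contra! h
    rw [← hcv, Finset.univ_eq_empty, Finset.sum_empty] at ha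
    exact ha.not_ge hΛ0
  have hsep : ∀ a : Fin n, ∃ i, ∀ j ≠ i, y j a = 0 := fun a => by
    by_cases h : ∃ i, y i a ≠ 0
    · obtain ⟨i, hi⟩ := h
      exact ⟨i, fun j hj => hy.eq_zero_of_ne hj.symm hi⟩
    · push Not at h
      exact ⟨Classical.arbitrary _, fun j _ => h j⟩
  obtain ⟨i, hi⟩ := hsep a
  refine ⟨p, ⟨i, Fin.ext ?_⟩, (pi_norm_le_iff_of_nonneg (sub_nonneg.2 hΛ1.le)).2 fun b => ?_⟩
  · rw [hv_apply i a hi] at ha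
    have hΛc : Λ < c i :=
      ha.trans_le (mul_le_of_le_one_right (hc i).1 (level_le_one hΛ0 hΛ1.le _))
    by_contra h
    linarith [hp_le i, pow_le_of_le_one hΛ0 hΛ1.le h]
  · obtain ⟨i, hi⟩ := hsep b
    rw [Pi.sub_apply, Real.norm_eq_abs, hv_apply i b hi]
    simp only [realize]
    rw [combo_apply_of_forall_ne p hi]
    exact abs_mul_level_sub_level_tsub_le hΛ0 hΛ1.le hΛk (hc i).1 (hle i b) (hp_le i) (hp_lt i)

end Realization

lemma abs_sub_lt_of_projIcc_floor_eq {δ B x y : ℝ} {r : ℤ} (hr : -r ≤ r) (hδ : 0 < δ)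
    (hBr : B / δ ≤ r) (hx : |x| ≤ B) (hy : |y| ≤ B)
    (h : Set.projIcc (-r) r hr ⌊x / δ⌋ = Set.projIcc (-r) r hr ⌊y / δ⌋) : |x - y| < δ := by
  have hmem : ∀ z : ℝ, |z| ≤ B → ⌊z / δ⌋ ∈ Set.Icc (-r) r := fun z hz => by
    have h1 : z / δ ≤ B / δ := div_le_div_of_nonneg_right (le_of_abs_le hz) hδ.le
    have h2 : -B / δ ≤ z / δ := div_le_div_of_nonneg_right (neg_le_of_abs_le hz) hδ.le
    rw [neg_div] at h2
    exact ⟨Int.le_floor.2 (by push_cast; linarith), Int.floor_le_iff.2 (by linarith)⟩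
  rw [Set.projIcc_of_mem hr (hmem x hx), Set.projIcc_of_mem hr (hmem y hy), Subtype.mk.injEq] at h
  have := Int.abs_sub_lt_one_of_floor_eq_floor h
  rwa [← sub_div, abs_div, abs_of_pos hδ, div_lt_one hδ] at this

lemma exists_lt_one_mul_sub_le {C η : ℝ} (hC : 0 < C) (hη : 0 < η) :
    ∃ Λ : ℝ, 0 < Λ ∧ Λ < 1 ∧ C * (1 - Λ) ≤ η := by
  have h0 : 0 < min (1 / 2 : ℝ) (η / C) := lt_min (by norm_num) (div_pos hη hC)
  refine ⟨1 - min (1 / 2) (η / C), by linarith [min_le_left (1 / 2 : ℝ) (η / C)], by linarith, ?_⟩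
  rw [sub_sub_cancel]
  calc C * min (1 / 2) (η / C) ≤ C * (η / C) := by gcongr; exact min_le_right _ _
    _ = η := mul_div_cancel₀ η hC.ne'

open MaxSeq in
theorem finite_stabilization_pos_general (C ε : ℝ) (hC : 0 < C) (hε : 0 < ε) (m : ℕ) :
    ∃ n : ℕ, ∀ f : (Fin n → ℝ) → ℝ,
      (∀ x ∈ PosSphere n, ∀ y ∈ PosSphere n, |f x - f y| ≤ C * ‖x - y‖) →
      ∃ y : Fin m → (Fin n → ℝ), IsPosBlockSeq m y ∧
        ∀ u ∈ PosSphereSpan y, ∀ w ∈ PosSphereSpan y, |f u - f w| < ε := by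
  obtain ⟨Λ, hΛ0, hΛ1, hCΛ⟩ := exists_lt_one_mul_sub_le hC (by positivity : 0 < ε / 4)
  obtain ⟨k, hk⟩ := exists_pow_lt_of_lt_one (sub_pos.2 hΛ1) hΛ1
  have hk0 : k ≠ 0 := by rintro rfl; linarith [pow_zero Λ]
  have hr : -⌈C / (ε / 2)⌉ ≤ ⌈C / (ε / 2)⌉ := neg_le_self (Int.ceil_nonneg (by positivity))
  obtain ⟨N, hN⟩ := exists_finite_gowers k m (Set.Icc (-⌈C / (ε / 2)⌉) ⌈C / (ε / 2)⌉)
  refine ⟨N, fun f hf => ?_⟩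
  obtain ⟨y, hFIN, hyN, hy, col, hcol⟩ :=
    hN fun q => Set.projIcc _ _ hr ⌊(f (realize N k Λ q) - f 1) / (ε / 2)⌋
  have hpeak i := exists_peak hk0 (hFIN i) (hyN i)
  have hnear : ∀ v ∈ PosSphereSpan fun i => realize N k Λ (y i), ∃ p : Fin m → Fin (k + 1),
      (∃ i, p i = 0) ∧ |f v - f (realize N k Λ (combo y p))| ≤ ε / 4 := fun v hv => by
    obtain ⟨p, hp, hvp⟩ := exists_combo_near_of_mem_posSphereSpan hΛ0.le hΛ1 hk.le hk0
      (fun i => (hFIN i).2.1) hpeak hy hv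
    exact ⟨p, hp, (hf v ⟨hv.2.1, hv.2.2⟩ _ (realize_combo_mem_posSphere hΛ0.le hΛ1.le hk0 hpeak
      hy hp)).trans ((mul_le_mul_of_nonneg_left hvp hC.le).trans hCΛ)⟩
  refine ⟨_, isPosBlockSeq_realize hΛ0.le hΛ1.le hk0 hpeak hy, fun u hu w hw => ?_⟩
  obtain ⟨p, hp, hup⟩ := hnear u hu
  obtain ⟨p', hp', hwp⟩ := hnear w hw
  have h1 := one_mem_posSphere (hpeak hp.choose).choose
  have hbound : ∀ g ∈ PosSphere N, |f g - f 1| ≤ C := fun g hg =>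
    (hf g hg 1 h1).trans (mul_le_of_le_one_right hC.le (norm_sub_le_one_of_mem_posSphere hg h1))
  have hpp' := abs_sub_lt_of_projIcc_floor_eq hr (half_pos hε) (Int.le_ceil _)
    (hbound _ (realize_combo_mem_posSphere hΛ0.le hΛ1.le hk0 hpeak hy hp))
    (hbound _ (realize_combo_mem_posSphere hΛ0.le hΛ1.le hk0 hpeak hy hp'))
    ((hcol p hp).trans (hcol p' hp').symm)
  rw [abs_le] at hup hwp
  rw [abs_lt] at hpp' ⊢
  constructor <;> linarith

/-- **Finite stabilization on the positive sphere of `ℓ_∞^n`.** For all `C, ε > 0` and `m ≥ 1`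
there is `n` such that every `C`-Lipschitz `f : PS_{ℓ_∞^n} → ℝ` admits a normalized positive
block sequence `(y_i)_{i<m}` with `osc(f ↾ PS_{[y_i]_{i<m}}) < ε`. -/
theorem finite_stabilization_pos (C ε : ℝ) (hC : 0 < C) (hε : 0 < ε) (m : ℕ) (hm : 1 ≤ m) :
    ∃ n : ℕ, ∀ f : (Fin n → ℝ) → ℝ,
      (∀ x ∈ PosSphere n, ∀ y ∈ PosSphere n, |f x - f y| ≤ C * ‖x - y‖) →
      ∃ y : Fin m → (Fin n → ℝ), IsPosBlockSeq m y ∧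
        ∀ u ∈ PosSphereSpan y, ∀ w ∈ PosSphereSpan y, |f u - f w| < ε :=
  finite_stabilization_pos_general C ε hC hε m
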